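/- Let p be an odd prime and define the Bell operator B = (1/p) Σ_{n,x,y∈Z_p} ω^{nxy} A_x^n ⊗ B_y^n on C^p ⊗ C^p, where A_x = ω^{2^{-1}x(2x+1)} D_{(1|x)} and B_y = ω^{4^{-1}y(y+1)} D_{(1|2^{-1}y)}. Then the largest eigenvalue of B equals p times the largest eigenvalue of the single-qudit operator S = Σ_{B∈Z_p} |ψ_B^{-B(B+2^{-1})}⟩⟨ψ_B^{-B(B+2^{-1})}|. -/

import Mathlib

/-!
In the product basis `|j₁ j₂⟩`, summing the characters `ω^{nxy}` over `x` and `y` forces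
`n = j₁ - k₁ = j₂ - k₂` and `n (k₁ - k₂) = 0`. Hence the Bell operator maps the diagonal vectors
`|j j⟩` among themselves, where it acts as `p • S`, and it is `p` times the identity on the
off-diagonal basis vectors `|j₁ j₂⟩`, `j₁ ≠ j₂`. Its spectrum is therefore `p • spec S ∪ {p}`.
Since `S` has unit diagonal, its trace is `p`, the dimension, so some eigenvalue of `S` is at
least `1` and the extra eigenvalue `p` never exceeds `p · λ_max(S)`.
-/

open Complex Matrix BigOperators Finset
open scoped Kronecker

noncomputable section

/-- Additive character `a ↦ exp(2πi a/p)` on `ZMod p`. -/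
def chi (p : ℕ) (a : ZMod p) : ℂ := Complex.exp (2 * Real.pi * Complex.I * (a.val : ℂ) / p)

/-- The shift operator `X : |j⟩ ↦ |j+1⟩`. -/
def Xop (p : ℕ) : Matrix (ZMod p) (ZMod p) ℂ := fun j k => if j = k + 1 then 1 else 0

/-- The clock operator `Z : |j⟩ ↦ ω^j |j⟩`. -/
def Zop (p : ℕ) : Matrix (ZMod p) (ZMod p) ℂ := Matrix.diagonal (fun j => chi p j)

/-- Weyl-Heisenberg displacement operator `D_(x|z) = ω^{2⁻¹ x z} X^x Z^z`. -/
def Dop (p : ℕ) [NeZero p] (x z : ZMod p) : Matrix (ZMod p) (ZMod p) ℂ :=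
  chi p ((2 : ZMod p)⁻¹ * x * z) • (Xop p ^ x.val * Zop p ^ z.val)

/-- The stabilizer MUB vector `|ψ_B^V⟩ = p^{-1/2} Σ_k ω^{2⁻¹ B k² - V k} |k⟩`. -/
def psi (p : ℕ) (B V : ZMod p) : ZMod p → ℂ :=
  fun k => ((Real.sqrt p : ℂ))⁻¹ * chi p ((2 : ZMod p)⁻¹ * B * k ^ 2 - V * k)

/-- The magic state `|f_{a,b,c}⟩ = p^{-1/2} Σ_k ω^{a k³ + b k² + c k} |k⟩`. -/
def magic (p : ℕ) (a b c : ZMod p) : ZMod p → ℂ :=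
  fun k => ((Real.sqrt p : ℂ))⁻¹ * chi p (a * k ^ 3 + b * k ^ 2 + c * k)

/-- Rank-one projector `|v⟩⟨v|`. -/
def proj (p : ℕ) (v : ZMod p → ℂ) : Matrix (ZMod p) (ZMod p) ℂ :=
  fun i j => v i * (starRingEnd ℂ) (v j)

/-- The single-qudit operator `S = Σ_B |ψ_B^{-B(B+2⁻¹)}⟩⟨ψ_B^{-B(B+2⁻¹)}|`. -/
def Sop (p : ℕ) [NeZero p] : Matrix (ZMod p) (ZMod p) ℂ :=
  ∑ B : ZMod p, proj p (psi p B (-B * (B + (2 : ZMod p)⁻¹)))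

/-- Alice's measurement operator `A_x = ω^{2⁻¹x(2x+1)} D_(1|x)`. -/
def Aop (p : ℕ) [NeZero p] (x : ZMod p) : Matrix (ZMod p) (ZMod p) ℂ :=
  chi p ((2 : ZMod p)⁻¹ * x * (2 * x + 1)) • Dop p 1 x

/-- Bob's measurement operator `B_y = ω^{4⁻¹y(y+1)} D_(1|2⁻¹y)`. -/
def Bop (p : ℕ) [NeZero p] (y : ZMod p) : Matrix (ZMod p) (ZMod p) ℂ :=
  chi p ((4 : ZMod p)⁻¹ * y * (y + 1)) • Dop p 1 ((2 : ZMod p)⁻¹ * y)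

/-- The Bell operator `B = (1/p) Σ_{n,x,y} ω^{nxy} A_x^n ⊗ B_y^n`. -/
def Bell (p : ℕ) [NeZero p] : Matrix (ZMod p × ZMod p) (ZMod p × ZMod p) ℂ :=
  (p : ℂ)⁻¹ • ∑ n : ZMod p, ∑ x : ZMod p, ∑ y : ZMod p,
    chi p (n * x * y) • ((Aop p x ^ n.val) ⊗ₖ (Bop p y ^ n.val))

open scoped Pointwise

section Character

variable {p : ℕ} [NeZero p]

lemma chi_eq_stdAddChar (a : ZMod p) : chi p a = ZMod.stdAddChar a := by
  rw [chi, ZMod.stdAddChar_apply, ZMod.toCircle_apply]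

lemma chi_add (a b : ZMod p) : chi p (a + b) = chi p a * chi p b := by
  simp only [chi_eq_stdAddChar, AddChar.map_add_eq_mul]

@[simp]
lemma chi_zero : chi p 0 = 1 := by
  simp only [chi_eq_stdAddChar, AddChar.map_zero_eq_one]

lemma conj_chi (a : ZMod p) : starRingEnd ℂ (chi p a) = chi p (-a) := by
  simp only [chi_eq_stdAddChar, AddChar.map_neg_eq_conj]

lemma chi_pow (a : ZMod p) (m : ℕ) : chi p a ^ m = chi p (m * a) := by
  simp only [chi_eq_stdAddChar, ← AddChar.map_nsmul_eq_pow, nsmul_eq_mul]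

lemma sum_chi_mul (c : ZMod p) : ∑ x : ZMod p, chi p (c * x) = if c = 0 then (p : ℂ) else 0 := by
  simp only [chi_eq_stdAddChar, mul_comm c, AddChar.sum_mulShift c (ZMod.isPrimitive_stdAddChar p),
    ZMod.card, apply_ite (Nat.cast : ℕ → ℂ), Nat.cast_zero]

def quadGaussSum (n k : ZMod p) : ℂ := ∑ t : ZMod p, chi p (n * t * (t + k + 2⁻¹ * (n + 1)))

lemma quadGaussSum_zero (k : ZMod p) : quadGaussSum (0 : ZMod p) k = p := by
  simp [quadGaussSum]

lemma Zop_pow_val (z : ZMod p) : Zop p ^ z.val = diagonal fun j => chi p (z * j) := by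
  simp only [Zop, diagonal_pow, Pi.pow_def, chi_pow, ZMod.natCast_zmod_val]

end Character

section Spectrum

variable {R α m n : Type*} [CommSemiring R] [CommRing α] [Algebra R α]
  [Fintype m] [Fintype n] [DecidableEq m] [DecidableEq n]

theorem spectrum_fromBlocks_zero (A : Matrix m m α) (D : Matrix n n α) :
    spectrum R (fromBlocks A 0 0 D) = spectrum R A ∪ spectrum R D := by
  ext r
  have hblocks : algebraMap R _ r - fromBlocks A 0 0 D
      = fromBlocks (algebraMap R _ r - A) 0 0 (algebraMap R _ r - D) := by
    rw [Algebra.algebraMap_eq_smul_one, Algebra.algebraMap_eq_smul_one,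
      Algebra.algebraMap_eq_smul_one, ← fromBlocks_one, fromBlocks_smul]
    simp only [sub_eq_add_neg, fromBlocks_neg, fromBlocks_add, neg_zero, add_zero, smul_zero]
  simp only [spectrum.mem_iff, Set.mem_union, hblocks, isUnit_iff_isUnit_det (fromBlocks _ _ _ _),
    det_fromBlocks_zero₂₁, IsUnit.mul_iff, ← isUnit_iff_isUnit_det, not_and_or]

lemma setOf_ofReal_mem_spectrum {A : Type*} [Ring A] [Algebra ℂ A] [Algebra ℝ A]
    [IsScalarTower ℝ ℂ A] (a : A) : {μ : ℝ | (μ : ℂ) ∈ spectrum ℂ a} = spectrum ℝ a :=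
  spectrum.preimage_algebraMap ℂ

theorem Matrix.IsHermitian.exists_one_le_mem_spectrum {𝕜 : Type*} [RCLike 𝕜] [Nonempty m]
    {A : Matrix m m 𝕜} (hA : A.IsHermitian) (hdiag : ∀ i, A i i = 1) :
    ∃ μ ∈ spectrum ℝ A, 1 ≤ μ := by
  have htrace : ∑ _i : m, (1 : ℝ) = ∑ i, hA.eigenvalues i := by
    have := hA.trace_eq_sum_eigenvalues
    simp only [trace, diag, hdiag, ← RCLike.ofReal_sum] at this
    exact_mod_cast this
  obtain ⟨i, -, hi⟩ := Finset.exists_le_of_sum_le univ_nonempty htrace.le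
  exact ⟨_, hA.eigenvalues_mem_spectrum_real i, hi⟩

lemma Real.sSup_insert_smul {s : Set ℝ} (hs : BddAbove s) {x : ℝ} (hx : x ∈ s) (h1 : 1 ≤ x)
    {c : ℝ} (hc : 0 ≤ c) : sSup (insert c (c • s)) = c * sSup s := by
  have : insert c (c • s) = c • insert 1 s := by rw [Set.smul_set_insert, smul_eq_mul, mul_one]
  rw [this, Real.sSup_smul_of_nonneg hc,
    csSup_insert hs ⟨x, hx⟩, sup_eq_right.mpr (h1.trans (le_csSup hs hx)), smul_eq_mul]

end Spectrum

section Operators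

variable {p : ℕ} [Fact p.Prime] (h2 : (2 : ZMod p) ≠ 0)
include h2

lemma Aop_apply (x j k : ZMod p) :
    Aop p x j k = if j = k + 1 then chi p (x ^ 2 + x + x * k) else 0 := by
  simp only [Aop, Dop, ZMod.val_one, pow_one, Zop_pow_val, Matrix.smul_apply, mul_diagonal, Xop,
    smul_eq_mul, ite_mul, one_mul, zero_mul, mul_ite, mul_zero]
  split_ifs
  · rw [mul_one, ← chi_add, ← chi_add]
    congr 1
    field_simp
    ring
  · simp

lemma Aop_pow_apply (x : ZMod p) (m : ℕ) (j k : ZMod p) :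
    (Aop p x ^ m) j k =
      if j = k + m then chi p (m * x * (x + k + 2⁻¹ * (m + 1))) else 0 := by
  induction m generalizing k with
  | zero => simp [one_apply]
  | succ m ih =>
    rw [pow_succ, mul_apply, Fintype.sum_eq_single (k + 1) fun t ht => by
      rw [Aop_apply h2, if_neg ht, mul_zero], Aop_apply h2, if_pos rfl, ih]
    push_cast
    split_ifs with hj hj' hj'
    · rw [← chi_add]
      congr 1
      field_simp
      ring
    · exact absurd (by rw [hj]; ring) hj'
    · exact absurd (by rw [hj']; ring) hj
    · rw [zero_mul]

lemma Bop_eq_Aop (y : ZMod p) : Bop p y = Aop p (2⁻¹ * y) := by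
  rw [Bop, Aop, show (4 : ZMod p) = 2 * 2 by norm_num]
  congr 2
  field_simp

lemma sum_sum_chi_mul_Aop_pow_mul_Bop_pow (n j1 j2 k1 k2 : ZMod p) :
    ∑ x : ZMod p, ∑ y : ZMod p,
      chi p (n * x * y) * ((Aop p x ^ n.val) j1 k1 * (Bop p y ^ n.val) j2 k2)
    = if j1 = k1 + n ∧ j2 = k2 + n then
        (if n * (k1 - k2) = 0 then (p : ℂ) else 0) * quadGaussSum n k2
      else 0 := by
  simp only [Bop_eq_Aop h2, Aop_pow_apply h2, ZMod.natCast_zmod_val]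
  by_cases h : j1 = k1 + n ∧ j2 = k2 + n
  · rw [if_pos h, ← sum_chi_mul, Finset.sum_mul]
    refine Finset.sum_congr rfl fun x _ => ?_
    let e := (Equiv.mulLeft₀ (2⁻¹ : ZMod p) (inv_ne_zero h2)).trans (Equiv.addLeft x)
    rw [quadGaussSum, Finset.mul_sum]
    -- with `t = x + 2⁻¹ y` the phase splits as `n (k1 - k2) x` plus the `quadGaussSum` phase at `t`
    refine Fintype.sum_equiv e _ _ fun y => ?_
    simp only [e, Equiv.trans_apply, Equiv.mulLeft₀_apply, Equiv.coe_addLeft, if_pos h.1, if_pos h.2,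
      ← chi_add]
    congr 1
    field_simp
    ring
  · rw [if_neg h]
    refine sum_eq_zero fun x _ => sum_eq_zero fun y _ => ?_
    rcases not_and_or.mp h with h | h <;> simp [h]

lemma Bell_apply (j1 j2 k1 k2 : ZMod p) :
    Bell p (j1, j2) (k1, k2) =
      if j1 - k1 = j2 - k2 ∧ (j1 - k1) * (k1 - k2) = 0 then quadGaussSum (j1 - k1) k2 else 0 := by
  simp only [Bell, Matrix.smul_apply, Matrix.sum_apply, kroneckerMap_apply, smul_eq_mul,
    sum_sum_chi_mul_Aop_pow_mul_Bop_pow h2]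
  rw [Fintype.sum_eq_single (j1 - k1) fun n hn => if_neg fun h => hn (by rw [h.1]; ring)]
  have hshift : (j1 = k1 + (j1 - k1) ∧ j2 = k2 + (j1 - k1)) ↔ j1 - k1 = j2 - k2 :=
    ⟨fun h => by rw [h.2]; ring, fun h => ⟨by ring, by rw [h]; ring⟩⟩
  have hp : (p : ℂ) ≠ 0 := Nat.cast_ne_zero.mpr (Fact.out : p.Prime).ne_zero
  simp only [hshift]
  split_ifs <;> simp_all

end Operators

section SingleQudit

variable {p : ℕ}

lemma isHermitian_proj (v : ZMod p → ℂ) : (proj p v).IsHermitian := by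
  ext i j
  simp only [conjTranspose_apply, proj, star_mul', RCLike.star_def, Complex.conj_conj, mul_comm]

variable [Fact p.Prime]

lemma isHermitian_Sop : (Sop p).IsHermitian := by
  rw [IsHermitian, Sop, conjTranspose_sum]
  exact Finset.sum_congr rfl fun B _ => isHermitian_proj _

lemma natCast_mul_Sop_apply (h2 : (2 : ZMod p) ≠ 0) (j k : ZMod p) :
    (p : ℂ) * Sop p j k = quadGaussSum (j - k) k := by
  have hp : (p : ℂ) ≠ 0 := Nat.cast_ne_zero.mpr (Fact.out : p.Prime).ne_zero
  have hsqrt : ((√p : ℝ) : ℂ)⁻¹ * ((√p : ℝ) : ℂ)⁻¹ = (p : ℂ)⁻¹ := by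
    rw [← mul_inv, ← ofReal_mul, Real.mul_self_sqrt (Nat.cast_nonneg p), ofReal_natCast]
  simp only [Sop, Matrix.sum_apply, proj, psi, mul_sum, map_mul, conj_chi, map_inv₀, conj_ofReal]
  refine Finset.sum_congr rfl fun B _ => ?_
  rw [mul_mul_mul_comm, ← mul_assoc, hsqrt, mul_inv_cancel₀ hp, one_mul, ← chi_add]
  congr 1
  field_simp
  ring

lemma Sop_apply_self (h2 : (2 : ZMod p) ≠ 0) (j : ZMod p) : Sop p j j = 1 := by
  have hp : (p : ℂ) ≠ 0 := Nat.cast_ne_zero.mpr (Fact.out : p.Prime).ne_zero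
  have := natCast_mul_Sop_apply h2 j j
  rw [sub_self, quadGaussSum_zero] at this
  exact (mul_eq_left₀ hp).mp this

end SingleQudit

def diagSumOffDiag (α : Type*) [DecidableEq α] : α ⊕ {q : α × α // q.1 ≠ q.2} ≃ α × α where
  toFun := Sum.elim (fun a => (a, a)) Subtype.val
  invFun q := if h : q.1 = q.2 then Sum.inl q.1 else Sum.inr ⟨q, h⟩
  left_inv := by
    rintro (a | ⟨q, h⟩)
    · simp
    · simp [h]
  right_inv := by rintro ⟨q1, q2⟩; by_cases h : q1 = q2 <;> simp [h]

section BlockStructure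

variable {p : ℕ} [Fact p.Prime] (h2 : (2 : ZMod p) ≠ 0)
include h2

lemma reindex_Bell :
    reindexAlgEquiv ℝ ℂ (diagSumOffDiag (ZMod p)).symm (Bell p)
      = fromBlocks ((p : ℝ) • Sop p) 0 0 ((p : ℝ) • 1) := by
  ext (a | ⟨⟨q1, q2⟩, hq⟩) (b | ⟨⟨r1, r2⟩, hr⟩) <;>
    simp only [coe_reindexAlgEquiv, reindex_apply, submatrix_apply, Equiv.symm_symm,
      diagSumOffDiag, Equiv.coe_fn_mk, Sum.elim_inl, Sum.elim_inr, fromBlocks_apply₁₁,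
      fromBlocks_apply₁₂, fromBlocks_apply₂₁, fromBlocks_apply₂₂, Bell_apply h2]
  · rw [if_pos ⟨trivial, by ring⟩, ← natCast_mul_Sop_apply h2, Matrix.smul_apply, real_smul,
      ofReal_natCast]
  · exact if_neg fun h => hr (sub_right_inj.mp h.1)
  · exact if_neg fun h => hq (sub_left_inj.mp h.1)
  · rw [Matrix.smul_apply, one_apply]
    by_cases hqr : q1 = r1 ∧ q2 = r2
    · obtain ⟨rfl, rfl⟩ := hqr
      simp [quadGaussSum_zero]
    · have hd : ¬(q1 - r1 = q2 - r2 ∧ (q1 - r1) * (r1 - r2) = 0) := by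
        rintro ⟨hd, hz⟩
        have h1 : q1 = r1 :=
          sub_eq_zero.mp ((mul_eq_zero.mp hz).resolve_right (sub_ne_zero.mpr hr))
        exact hqr ⟨h1, by rwa [h1, sub_self, eq_comm, sub_eq_zero] at hd⟩
      rw [if_neg hd, if_neg (by simpa using hqr), smul_zero]

lemma spectrum_real_Bell :
    spectrum ℝ (Bell p) = insert (p : ℝ) ((p : ℝ) • spectrum ℝ (Sop p)) := by
  have : Nonempty {q : ZMod p × ZMod p // q.1 ≠ q.2} := ⟨⟨(0, 1), zero_ne_one⟩⟩
  have hS : (spectrum ℝ (Sop p)).Nonempty := ⟨_, isHermitian_Sop.eigenvalues_mem_spectrum_real 0⟩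
  rw [← AlgEquiv.spectrum_eq (reindexAlgEquiv ℝ ℂ (diagSumOffDiag (ZMod p)).symm), reindex_Bell h2,
    spectrum_fromBlocks_zero, spectrum.smul_eq_smul _ _ hS, ← Algebra.algebraMap_eq_smul_one,
    spectrum.scalar_eq, Set.union_singleton]

end BlockStructure

theorem stmt13 (p : ℕ) [Fact p.Prime] (hp2 : p ≠ 2) :
    sSup {μ : ℝ | (μ : ℂ) ∈ spectrum ℂ (Bell p)}
      = p * sSup {μ : ℝ | (μ : ℂ) ∈ spectrum ℂ (Sop p)} := by
  have h2 : (2 : ZMod p) ≠ 0 := Ring.two_ne_zero (by rwa [ZMod.ringChar_zmod_n])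
  obtain ⟨μ, hμ, h1⟩ := isHermitian_Sop.exists_one_le_mem_spectrum (Sop_apply_self h2)
  rw [setOf_ofReal_mem_spectrum, setOf_ofReal_mem_spectrum, spectrum_real_Bell h2]
  exact Real.sSup_insert_smul (finite_real_spectrum (A := Sop p)).bddAbove hμ h1 (Nat.cast_nonneg p)
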